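/- Optimality of an improvement-stable policy (optimality part of Theorem 1): let π* be a policy that maximizes its own improvement objective at every state, i.e., for every state s and every policy π̃, J_{π*}(π*, s) ≥ J_{π*}(π̃, s). Then for every policy π and every state-action pair (s,a), q^d_{π*}(s,a) ≥ q^d_π(s,a). -/

import Mathlib

open Finset Filter Topology

def IsPolicy {S A : Type*} [Fintype A] (pi : S → A → ℝ) : Prop :=
  (∀ s a, 0 ≤ pi s a) ∧ (∀ s, ∑ a, pi s a = 1)

def IsKernel {S A : Type*} [Fintype S] (p : S → A → S → ℝ) : Prop :=
  (∀ s a s', 0 ≤ p s a s') ∧ (∀ s a, ∑ s', p s a s' = 1)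

noncomputable def klPen {S A : Type*} [Fintype A]
    (πb π : S → A → ℝ) (s : S) : ℝ :=
  ∑ a, π s a * Real.log (π s a / πb s a)

noncomputable def bellman {S A : Type*} [Fintype S] [Fintype A]
    (p : S → A → S → ℝ) (r : S → A → ℝ) (γ τ : ℝ) (πb π : S → A → ℝ)
    (q : S × A → ℝ) : S × A → ℝ :=
  fun sa => r sa.1 sa.2 + γ * ∑ s', p sa.1 sa.2 s' *
    ((∑ a', π s' a' * q (s', a')) - τ * klPen πb π s')

noncomputable def supNorm {X : Type*} [Fintype X] [Nonempty X] (f : X → ℝ) : ℝ :=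
  Finset.univ.sup' Finset.univ_nonempty (fun x => |f x|)

noncomputable def Jobj {S A : Type*} [Fintype A]
    (τ : ℝ) (πb : S → A → ℝ) (qd : S × A → ℝ) (πt : S → A → ℝ) (s : S) : ℝ :=
  (∑ a, πt s a * qd (s, a)) - τ * klPen πb πt s

/-!
Since `π*` maximises its own improvement objective, replacing `π*` by any policy `π` in the
soft Bellman operator can only lower it: `T^π q^d_{π*} ≤ T^{π*} q^d_{π*} = q^d_{π*}`. So `q^d_{π*}`
is a supersolution and `q^d_π` a solution of `T^π`, and since `T^π` shifts the largest gap
`max (q₁ - q₂)` by at most the factor `γ < 1`, a solution never exceeds a supersolution.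
-/

section SoftBellman

variable {S A : Type*} [Fintype S] [Fintype A]
  {p : S → A → S → ℝ} {r : S → A → ℝ} {γ τ : ℝ} {πb : S → A → ℝ}

lemma bellman_le_bellman_of_forall_Jobj_le (hp : IsKernel p) (hγ0 : 0 ≤ γ)
    {π π' : S → A → ℝ} {q : S × A → ℝ} (h : ∀ s, Jobj τ πb q π s ≤ Jobj τ πb q π' s)
    (sa : S × A) : bellman p r γ τ πb π q sa ≤ bellman p r γ τ πb π' q sa := by
  change r sa.1 sa.2 + γ * ∑ s', p sa.1 sa.2 s' * Jobj τ πb q π s'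
    ≤ r sa.1 sa.2 + γ * ∑ s', p sa.1 sa.2 s' * Jobj τ πb q π' s'
  gcongr with s' _
  · exact hp.1 _ _ _
  · exact h s'

lemma bellman_sub_bellman (π : S → A → ℝ) (q₁ q₂ : S × A → ℝ) (sa : S × A) :
    bellman p r γ τ πb π q₁ sa - bellman p r γ τ πb π q₂ sa
      = γ * ∑ s', p sa.1 sa.2 s' * ∑ a', π s' a' * (q₁ (s', a') - q₂ (s', a')) := by
  simp only [bellman, mul_sub, Finset.sum_sub_distrib]
  ring

lemma bellman_sub_bellman_le (hp : IsKernel p) (hγ0 : 0 ≤ γ)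
    {π : S → A → ℝ} (hπ : IsPolicy π) {q₁ q₂ : S × A → ℝ} {c : ℝ}
    (hc : ∀ sb, q₁ sb - q₂ sb ≤ c) (sa : S × A) :
    bellman p r γ τ πb π q₁ sa - bellman p r γ τ πb π q₂ sa ≤ γ * c := by
  have hinner : ∀ s', ∑ a', π s' a' * (q₁ (s', a') - q₂ (s', a')) ≤ c := fun s' =>
    calc ∑ a', π s' a' * (q₁ (s', a') - q₂ (s', a'))
        ≤ ∑ a', π s' a' * c := by gcongr with a' _; exacts [hπ.1 _ _, hc _]
      _ = c := by rw [← Finset.sum_mul, hπ.2 s', one_mul]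
  rw [bellman_sub_bellman]
  gcongr
  calc ∑ s', p sa.1 sa.2 s' * ∑ a', π s' a' * (q₁ (s', a') - q₂ (s', a'))
      ≤ ∑ s', p sa.1 sa.2 s' * c := by gcongr with s' _; exacts [hp.1 _ _ _, hinner s']
    _ = c := by rw [← Finset.sum_mul, hp.2 sa.1 sa.2, one_mul]

lemma le_of_le_bellman_of_bellman_le (hp : IsKernel p) (hγ0 : 0 ≤ γ) (hγ1 : γ < 1)
    {π : S → A → ℝ} (hπ : IsPolicy π) {q₁ q₂ : S × A → ℝ}
    (hsub : ∀ sa, q₁ sa ≤ bellman p r γ τ πb π q₁ sa)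
    (hsuper : ∀ sa, bellman p r γ τ πb π q₂ sa ≤ q₂ sa) (sa : S × A) : q₁ sa ≤ q₂ sa := by
  obtain ⟨sm, -, hsm⟩ :=
    Finset.exists_max_image univ (fun sb => q₁ sb - q₂ sb) ⟨sa, mem_univ sa⟩
  have hstep : bellman p r γ τ πb π q₁ sm - bellman p r γ τ πb π q₂ sm
      ≤ γ * (q₁ sm - q₂ sm) :=
    bellman_sub_bellman_le hp hγ0 hπ (fun sb => hsm sb (mem_univ sb)) sm
  have hgap : q₁ sm - q₂ sm ≤ γ * (q₁ sm - q₂ sm) := by linarith [hsub sm, hsuper sm]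
  have hgap_nonpos : q₁ sm - q₂ sm ≤ 0 := by nlinarith
  linarith [hsm sa (mem_univ sa)]

end SoftBellman

theorem stmt13_general {S A : Type*} [Fintype S] [Fintype A]
    (p : S → A → S → ℝ) (hp : IsKernel p)
    (r : S → A → ℝ) (γ τ : ℝ) (hγ0 : 0 ≤ γ) (hγ1 : γ < 1)
    (πb : S → A → ℝ)
    (πs : S → A → ℝ)
    (qds : S × A → ℝ) (hqds : bellman p r γ τ πb πs qds = qds)
    (hmax : ∀ s : S, ∀ πt : S → A → ℝ, IsPolicy πt →
      Jobj τ πb qds πt s ≤ Jobj τ πb qds πs s) :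
    ∀ π : S → A → ℝ, IsPolicy π →
      ∀ qd : S × A → ℝ, bellman p r γ τ πb π qd = qd →
        ∀ sa : S × A, qd sa ≤ qds sa := by
  intro π hπ qd hqd
  have hsuper : ∀ sa, bellman p r γ τ πb π qds sa ≤ qds sa := fun sa =>
    (bellman_le_bellman_of_forall_Jobj_le hp hγ0 (fun s => hmax s π hπ) sa).trans_eq
      (congrFun hqds sa)
  exact le_of_le_bellman_of_bellman_le hp hγ0 hγ1 hπ (fun sa => (congrFun hqd sa).ge) hsuper

theorem stmt13 {S A : Type*} [Fintype S] [Fintype A] [Nonempty S] [Nonempty A]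
    (p : S → A → S → ℝ) (hp : IsKernel p)
    (r : S → A → ℝ) (γ τ : ℝ) (hγ0 : 0 ≤ γ) (hγ1 : γ < 1) (hτ : 0 ≤ τ)
    (πb : S → A → ℝ) (hπb : IsPolicy πb) (hπbpos : ∀ s a, 0 < πb s a)
    (πs : S → A → ℝ) (hπs : IsPolicy πs)
    (qds : S × A → ℝ) (hqds : bellman p r γ τ πb πs qds = qds)
    (hmax : ∀ s : S, ∀ πt : S → A → ℝ, IsPolicy πt →
      Jobj τ πb qds πt s ≤ Jobj τ πb qds πs s) :
    ∀ π : S → A → ℝ, IsPolicy π →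
      ∀ qd : S × A → ℝ, bellman p r γ τ πb π qd = qd →
        ∀ sa : S × A, qd sa ≤ qds sa :=
  stmt13_general p hp r γ τ hγ0 hγ1 πb πs qds hqds hmax
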